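/- arXiv:2109.10935 — 4 statements merged into one kernel-verified Lean document; each statement's English description precedes it below -/
import Mathlib

section
/- Let x be a random vector in R^d whose components are i.i.d. Uniform([-1/2, 1/2]). Then for any symmetric matrix Δ ∈ R^{d×d}, E[(xᵀΔx)²] ≥ (1/180)·‖Δ‖_F², where ‖·‖_F denotes the Frobenius norm. -/
/-!
Expanding the square, `E[(xᵀΔx)²] = ∑ Δᵢⱼ Δₖₗ E[xᵢ xⱼ xₖ xₗ]`. For i.i.d. centred coordinates
with variance `σ²` and fourth moment `m₄`, a fourth moment `E[xᵢ xⱼ xₖ xₗ]` vanishes unless the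
indices pair up, which gives `E[(xᵀΔx)²] = σ⁴ ((tr Δ)² + 2‖Δ‖_F²) + (m₄ - 3σ⁴) ∑ Δᵢᵢ²` for
symmetric `Δ`. For `Uniform[-1/2, 1/2]`, `σ² = 1/12` and `m₄ = 1/80`, so `m₄ - 3σ⁴ = -1/120`,
and `∑ Δᵢᵢ² ≤ ‖Δ‖_F²` leaves at least `(2/144 - 1/120) ‖Δ‖_F² = ‖Δ‖_F² / 180`.
-/

open MeasureTheory

/-- The uniform distribution on the cube `[-1/2, 1/2]^d`, with i.i.d. coordinates. -/
noncomputable def unifCube (d : ℕ) : Measure (Fin d → ℝ) :=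
  Measure.pi fun _ => volume.restrict (Set.Icc (-(1/2) : ℝ) (1/2))

open Finset

section FourthMoments

variable {ι : Type*} [Fintype ι]

theorem quadForm_sq_eq_sum (x : ι → ℝ) (Δ : Matrix ι ι ℝ) :
    (∑ i, ∑ j, x i * Δ i j * x j) ^ 2
      = ∑ i, ∑ j, ∑ k, ∑ l, Δ i j * Δ k l * (x i * x j * x k * x l) := by
  rw [sq, sum_mul_sum]
  simp_rw [sum_mul, mul_sum]
  rw [sum_congr rfl fun (i : ι) _ => sum_comm]
  exact sum_congr rfl fun i _ => sum_congr rfl fun j _ =>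
    sum_congr rfl fun k _ => sum_congr rfl fun l _ => by ring

variable [DecidableEq ι]

/-- With `a = σ⁴` and `b = m₄ - 3σ⁴` this is `E[xᵢ xⱼ xₖ xₗ]` for i.i.d. centred coordinates:
each of the three pairings contributes `σ⁴`, and `b` corrects the case `i = j = k = l`, which
all three pairings count. -/
def fourthMomentTensor (a b : ℝ) (i j k l : ι) : ℝ :=
  a * ((if i = j then 1 else 0) * (if k = l then 1 else 0)
      + (if i = k then 1 else 0) * (if j = l then 1 else 0)
      + (if i = l then 1 else 0) * (if j = k then 1 else 0))
    + b * ((if i = j then 1 else 0) * (if i = k then 1 else 0) * (if i = l then 1 else 0))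

theorem sum_mul_fourthMomentTensor (Δ : Matrix ι ι ℝ) (a b : ℝ) :
    ∑ i, ∑ j, ∑ k, ∑ l, Δ i j * Δ k l * fourthMomentTensor a b i j k l
      = a * ((∑ i, Δ i i) ^ 2 + ∑ i, ∑ j, Δ i j ^ 2 + ∑ i, ∑ j, Δ i j * Δ j i)
        + b * ∑ i, Δ i i ^ 2 := by
  have hδ (i j k l : ι) : Δ i j * Δ k l * fourthMomentTensor a b i j k l
      = a * ((if i = j then 1 else 0) * ((if k = l then 1 else 0) * (Δ i j * Δ k l)))
        + a * ((if i = k then 1 else 0) * ((if j = l then 1 else 0) * (Δ i j * Δ k l)))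
        + a * ((if i = l then 1 else 0) * ((if j = k then 1 else 0) * (Δ i j * Δ k l)))
        + b * ((if i = j then 1 else 0) * ((if i = k then 1 else 0)
          * ((if i = l then 1 else 0) * (Δ i j * Δ k l)))) := by
    rw [fourthMomentTensor]; ring
  simp_rw [hδ, sum_add_distrib, ← mul_sum, boole_mul]
  simp only [sum_ite_eq, mem_univ, if_true]
  simp_rw [sq, sum_mul_sum]
  ring

theorem mul_mul_mul_eq_prod_pow_count (x : ι → ℝ) (i j k l : ι) :
    x i * x j * x k * x l = ∏ m, x m ^ Multiset.count m {i, j, k, l} := by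
  rw [← prod_subset (subset_univ _) fun m _ hm => by
    rw [Multiset.count_eq_zero.mpr (Multiset.mem_toFinset.not.mp hm), pow_zero],
    ← prod_multiset_map_count]
  simp [mul_assoc]

variable {μ : Measure ℝ} [IsProbabilityMeasure μ]

theorem integral_mul_mul_mul_pi (hmean : ∫ t, t ∂μ = 0) (i j k l : ι) :
    ∫ x, x i * x j * x k * x l ∂(Measure.pi fun _ => μ) =
      fourthMomentTensor ((∫ t, t ^ 2 ∂μ) ^ 2) (∫ t, t ^ 4 ∂μ - 3 * (∫ t, t ^ 2 ∂μ) ^ 2)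
        i j k l := by
  simp_rw [mul_mul_mul_eq_prod_pow_count]
  rw [integral_fintype_prod_eq_prod (fun m t => t ^ Multiset.count m {i, j, k, l}),
    ← prod_subset (subset_univ ({i, j, k, l} : Multiset ι).toFinset) fun m _ hm => by
      rw [Multiset.count_eq_zero.mpr (Multiset.mem_toFinset.not.mp hm)]; simp]
  by_cases hij : i = j <;> by_cases hik : i = k <;> by_cases hil : i = l <;>
    by_cases hjk : j = k <;> by_cases hjl : j = l <;> by_cases hkl : k = l <;>
    simp [fourthMomentTensor, Multiset.count_cons, eq_comm, *] <;> ring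

theorem integrable_mul_mul_mul_pi (hmom : ∀ n ≤ 4, Integrable (fun t : ℝ => t ^ n) μ)
    (i j k l : ι) :
    Integrable (fun x : ι → ℝ => x i * x j * x k * x l) (Measure.pi fun _ => μ) := by
  simp_rw [mul_mul_mul_eq_prod_pow_count]
  exact Integrable.fintype_prod fun m => hmom _ <|
    (Multiset.count_le_card _ _).trans_eq (by simp)

theorem integral_quadForm_sq_pi (hmean : ∫ t, t ∂μ = 0)
    (hmom : ∀ n ≤ 4, Integrable (fun t : ℝ => t ^ n) μ) (Δ : Matrix ι ι ℝ) :
    ∫ x, (∑ i, ∑ j, x i * Δ i j * x j) ^ 2 ∂(Measure.pi fun _ => μ)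
      = (∫ t, t ^ 2 ∂μ) ^ 2 * ((∑ i, Δ i i) ^ 2 + ∑ i, ∑ j, Δ i j ^ 2 + ∑ i, ∑ j, Δ i j * Δ j i)
        + (∫ t, t ^ 4 ∂μ - 3 * (∫ t, t ^ 2 ∂μ) ^ 2) * ∑ i, Δ i i ^ 2 := by
  have hmonomial := integrable_mul_mul_mul_pi (ι := ι) hmom
  simp_rw [quadForm_sq_eq_sum]
  simp (disch := intro _ _; fun_prop) only [integral_finsetSum, integral_const_mul,
    integral_mul_mul_mul_pi hmean]
  exact sum_mul_fourthMomentTensor Δ _ _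

end FourthMoments

theorem integral_pow_restrict_Icc {a b : ℝ} (hab : a ≤ b) (n : ℕ) :
    ∫ t in Set.Icc a b, t ^ n = (b ^ (n + 1) - a ^ (n + 1)) / (n + 1) := by
  rw [integral_Icc_eq_integral_Ioc, ← intervalIntegral.integral_of_le hab, integral_pow]

/-- For `x` with i.i.d. `Uniform([-1/2,1/2])` coordinates and `Δ` symmetric,
`E[(xᵀΔx)²] ≥ (1/180)‖Δ‖_F²`. -/
theorem uniform_quadratic_form_lower_bound (d : ℕ) (Δ : Matrix (Fin d) (Fin d) ℝ)
    (hΔ : Δ.IsSymm) :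
    (1/180 : ℝ) * ∑ i, ∑ j, (Δ i j)^2
      ≤ ∫ x, (∑ i, ∑ j, x i * Δ i j * x j)^2 ∂(unifCube d) := by
  have : IsProbabilityMeasure (volume.restrict (Set.Icc (-(1/2) : ℝ) (1/2))) :=
    ⟨by simp; norm_num⟩
  have hmoment (n : ℕ) := integral_pow_restrict_Icc (by norm_num : -(1/2) ≤ (1/2 : ℝ)) n
  have hsymm : ∑ i, ∑ j, Δ i j * Δ j i = ∑ i, ∑ j, Δ i j ^ 2 := by
    simp_rw [hΔ.apply, sq]
  have hdiag : ∑ i, Δ i i ^ 2 ≤ ∑ i, ∑ j, Δ i j ^ 2 :=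
    sum_le_sum fun i _ => single_le_sum (fun j _ => sq_nonneg (Δ i j)) (mem_univ i)
  rw [unifCube, integral_quadForm_sq_pi (by simpa using hmoment 1)
    (fun n _ => (continuous_pow n).integrableOn_Icc) Δ, hmoment 2, hmoment 4, hsymm]
  norm_num
  linarith [sq_nonneg (∑ i, Δ i i)]
end

section
/- Let θ, θ' ∈ R^{d×k} with k ≥ d, let φ = θθᵀ and φ' = θ'θ'ᵀ, and suppose ‖φ − φ'‖_F ≤ η and the smallest singular value of θ satisfies σ_min(θ) ≥ σ₀ > 0. Then there exist orthogonal matrices R, R' ∈ R^{k×k} such that ‖θR − θ'R'‖_F ≤ η/σ₀. -/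
/-!
Let `A = √(θθᵀ)`, `B = √(θ'θ'ᵀ)` and let `J = [I 0] ∈ ℝ^{d×k}`, so `JJᵀ = I`. Then `θ` and `AJ`
have the same Gram matrix `θθᵀ`, so the isometry between their row spans extends to an orthogonal
`R` with `θR = AJ`; likewise `θ'R' = BJ`, and `‖θR − θ'R'‖_F = ‖A − B‖_F`.
The bound on `σ_min(θ)` says `A² ⪰ σ₀²I`, hence `A ⪰ σ₀I`. With `E = A − B` we have
`θθᵀ − θ'θ'ᵀ = AE + EB`, so `⟨E, θθᵀ − θ'θ'ᵀ⟩_F = tr(EAE) + tr(EBE) ≥ σ₀‖E‖_F²`, while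
Cauchy–Schwarz bounds the left side by `‖E‖_F · η`.
-/

open Matrix
open scoped MatrixOrder

attribute [local instance] Matrix.frobeniusNormedAddCommGroup

theorem LinearIsometry.exists_comp_eq_of_norm_eq {E V : Type*} [AddCommGroup E] [Module ℝ E]
    [NormedAddCommGroup V] [InnerProductSpace ℝ V] [FiniteDimensional ℝ V] {f g : E →ₗ[ℝ] V}
    (h : ∀ x, ‖f x‖ = ‖g x‖) : ∃ Φ : V →ₗᵢ[ℝ] V, ∀ x, Φ (f x) = g x := by
  have hker : LinearMap.ker f ≤ LinearMap.ker g := fun x hx => by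
    rw [LinearMap.mem_ker, ← norm_eq_zero, ← h, norm_eq_zero]
    exact hx
  have hL : ∀ x, (LinearMap.ker f).liftQ g hker
      (f.quotKerEquivRange.symm ⟨f x, LinearMap.mem_range_self f x⟩) = g x := fun x => by
    rw [LinearMap.quotKerEquivRange_symm_apply_image, Submodule.mkQ_apply, Submodule.liftQ_apply]
  let L : LinearMap.range f →ₗᵢ[ℝ] V :=
    { toLinearMap := (LinearMap.ker f).liftQ g hker ∘ₗ f.quotKerEquivRange.symm.toLinearMap
      norm_map' := by
        rintro ⟨_, x, rfl⟩
        simp only [LinearMap.coe_comp, LinearEquiv.coe_coe, Function.comp_apply, hL, h,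
          Submodule.coe_norm] }
  exact ⟨L.extend, fun x => (L.extend_apply ⟨f x, LinearMap.mem_range_self f x⟩).trans (hL x)⟩

namespace Matrix

variable {m n p : Type*}

theorem exists_mem_orthogonalGroup_mul_eq_of_mul_transpose_eq [Fintype m] [Fintype n]
    [DecidableEq n] {M N : Matrix m n ℝ} (h : M * Mᵀ = N * Nᵀ) :
    ∃ R ∈ orthogonalGroup n ℝ, M * R = N := by
  classical
  have hsq (K : Matrix m n ℝ) (x : EuclideanSpace ℝ m) :
      ‖toLpLin 2 2 Kᵀ x‖ ^ 2 = x.ofLp ᵥ* (K * Kᵀ) ⬝ᵥ x.ofLp := by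
    rw [← real_inner_self_eq_norm_sq, EuclideanSpace.inner_eq_star_dotProduct, star_trivial,
      toLpLin_apply, WithLp.ofLp_toLp, ← vecMul_vecMul, ← dotProduct_mulVec, mulVec_transpose]
  obtain ⟨Φ, hΦ⟩ := LinearIsometry.exists_comp_eq_of_norm_eq (f := toLpLin 2 2 Mᵀ)
    (g := toLpLin 2 2 Nᵀ) fun x => by
      rw [← sq_eq_sq₀ (norm_nonneg _) (norm_nonneg _), hsq, hsq, h]
  set Q := (toLpLin 2 2).symm Φ.toLinearMap
  have hQ : Q * Mᵀ = Nᵀ := by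
    refine (toLpLin 2 2).injective ?_
    rw [toLpLin_mul_same, LinearEquiv.apply_symm_apply]
    exact LinearMap.ext hΦ
  have hQ_mem : Q ∈ orthogonalGroup n ℝ :=
    (Φ.toLinearIsometryEquiv rfl).toMatrix_mem_unitaryGroup (EuclideanSpace.basisFun n ℝ)
      (EuclideanSpace.basisFun n ℝ)
  refine ⟨Qᵀ, ?_, ?_⟩
  · rw [mem_orthogonalGroup_iff, transpose_transpose]
    exact (mem_orthogonalGroup_iff' n ℝ).mp hQ_mem
  · rw [← transpose_transpose M, ← transpose_mul, hQ, transpose_transpose]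

theorem submatrix_one_mul_transpose_submatrix_one [Fintype n] [DecidableEq m] [DecidableEq n]
    {e : m → n} (he : Function.Injective e) :
    (1 : Matrix n n ℝ).submatrix e id * ((1 : Matrix n n ℝ).submatrix e id)ᵀ = 1 := by
  rw [transpose_submatrix, transpose_one, ← submatrix_mul _ _ _ _ _ Function.bijective_id,
    Matrix.one_mul, submatrix_one _ he]

theorem frobenius_norm_eq_sqrt_sum_sq [Fintype m] [Fintype n] (X : Matrix m n ℝ) :
    ‖X‖ = √(∑ i, ∑ j, X i j ^ 2) := by
  simp [frobenius_norm_def, Real.sqrt_eq_rpow]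

theorem frobenius_norm_sq_eq_trace [Fintype m] [Fintype n] (X : Matrix m n ℝ) :
    ‖X‖ ^ 2 = trace (X * Xᵀ) := by
  rw [frobenius_norm_eq_sqrt_sum_sq, Real.sq_sqrt (by positivity)]
  simp [trace, mul_apply, sq]

theorem trace_mul_transpose_le_frobenius_norm_mul [Fintype m] [Fintype n] (X Y : Matrix m n ℝ) :
    trace (X * Yᵀ) ≤ ‖X‖ * ‖Y‖ := by
  have hinner : trace (X * Yᵀ) = inner ℝ (WithLp.toLp 2 fun i => WithLp.toLp 2 (X i))
      (WithLp.toLp 2 fun i => WithLp.toLp 2 (Y i)) := by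
    simp [trace, mul_apply, PiLp.inner_apply, mul_comm]
  rw [hinner]
  exact real_inner_le_norm _ _

theorem frobenius_norm_mul_of_mul_transpose_eq_one [Fintype m] [Fintype n] [Fintype p]
    [DecidableEq n] {J : Matrix n p ℝ} (hJ : J * Jᵀ = 1) (X : Matrix m n ℝ) : ‖X * J‖ = ‖X‖ := by
  rw [← sq_eq_sq₀ (norm_nonneg _) (norm_nonneg _), frobenius_norm_sq_eq_trace,
    frobenius_norm_sq_eq_trace, transpose_mul, Matrix.mul_assoc, ← Matrix.mul_assoc J, hJ,
    Matrix.one_mul]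

theorem posSemidef_sub_smul_one_of_forall_le [Fintype n] [DecidableEq n] {φ : Matrix n n ℝ}
    (hφ : φᵀ = φ) {c : ℝ} (h : ∀ v : n → ℝ, c * ∑ i, v i ^ 2 ≤ ∑ i, ∑ j, v i * φ i j * v j) :
    (φ - c • 1).PosSemidef := by
  refine posSemidef_iff_dotProduct_mulVec.mpr ⟨?_, fun v => ?_⟩
  · rw [IsHermitian, conjTranspose_eq_transpose_of_trivial, transpose_sub, hφ, transpose_smul,
      transpose_one]
  · have hvv : v ⬝ᵥ v = ∑ i, v i ^ 2 := by simp [dotProduct, sq]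
    have hvφv : v ⬝ᵥ φ *ᵥ v = ∑ i, ∑ j, v i * φ i j * v j := by
      simp [dotProduct, mulVec, Finset.mul_sum, mul_assoc]
    simp only [star_trivial, sub_mulVec, smul_mulVec, one_mulVec, dotProduct_sub,
      dotProduct_smul, smul_eq_mul, sub_nonneg, hvv, hvφv]
    exact h v

theorem posSemidef_sqrt_sub_smul_one [Fintype n] [DecidableEq n] {φ : Matrix n n ℝ} {c : ℝ}
    (h : (φ - c ^ 2 • 1).PosSemidef) : (CFC.sqrt φ - c • 1).PosSemidef := by
  rw [← le_iff, ← Algebra.algebraMap_eq_smul_one] at *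
  have hφ : 0 ≤ φ := le_trans (algebraMap_nonneg (Matrix n n ℝ) (sq_nonneg c)) h
  rw [algebraMap_le_iff_le_spectrum] at h ⊢
  intro x hx
  rw [CFC.sqrt_eq_real_sqrt φ, cfcₙ_eq_cfc, cfc_map_spectrum Real.sqrt φ] at hx
  obtain ⟨y, hy, rfl⟩ := hx
  exact Real.le_sqrt_of_sq_le (h y hy)

theorem sqrt_mul_mul_transpose_sqrt_mul [Fintype m] [Fintype n] [DecidableEq m]
    {φ : Matrix m m ℝ} (hφ : φ.PosSemidef) {J : Matrix m n ℝ} (hJ : J * Jᵀ = 1) :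
    CFC.sqrt φ * J * (CFC.sqrt φ * J)ᵀ = φ := by
  have hsymm : (CFC.sqrt φ)ᵀ = CFC.sqrt φ := by
    simpa using (nonneg_iff_posSemidef.mp (CFC.sqrt_nonneg φ)).isHermitian.eq
  rw [transpose_mul, Matrix.mul_assoc, ← Matrix.mul_assoc J, hJ, Matrix.one_mul, hsymm,
    CFC.sqrt_mul_sqrt_self φ hφ.nonneg]

theorem mul_frobenius_norm_sub_le [Fintype n] [DecidableEq n] {A B : Matrix n n ℝ} {c : ℝ}
    (hA : (A - c • 1).PosSemidef) (hB : B.PosSemidef) :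
    c * ‖A - B‖ ≤ ‖A * A - B * B‖ := by
  set E := A - B
  have hAt : Aᵀ = A := by simpa using hA.isHermitian.eq
  have hBt : Bᵀ = B := by simpa using hB.isHermitian.eq
  have hEt : Eᵀ = E := by rw [transpose_sub, hAt, hBt]
  have hΔ : A * A - B * B = A * E + E * B := by
    simp only [E]
    noncomm_ring
  have hΔt : (A * A - B * B)ᵀ = A * A - B * B := by
    rw [transpose_sub, transpose_mul, transpose_mul, hAt, hBt]
  clear_value E
  have hA' := (hA.conjTranspose_mul_mul_same E).trace_nonneg
  have hB' := (hB.conjTranspose_mul_mul_same E).trace_nonneg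
  have hlower : c * ‖E‖ ^ 2 ≤ trace (E * (A * A - B * B)ᵀ) := by
    rw [frobenius_norm_sq_eq_trace]
    simp only [conjTranspose_eq_transpose_of_trivial, hEt] at hA' hB'
    have hEAE : trace (E * (A - c • 1) * E) = trace (E * (A * E)) - c * trace (E * E) := by
      rw [Matrix.mul_sub, Matrix.sub_mul, trace_sub, Matrix.mul_smul, Matrix.mul_one,
        Matrix.smul_mul, trace_smul, smul_eq_mul, Matrix.mul_assoc]
    have hEEB : trace (E * (E * B)) = trace (E * B * E) := trace_mul_comm _ _
    rw [hEt, hΔt, hΔ, Matrix.mul_add, trace_add, hEEB]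
    linarith
  have hCS := trace_mul_transpose_le_frobenius_norm_mul E (A * A - B * B)
  rcases (norm_nonneg E).eq_or_lt with hE0 | hEpos
  · rw [← hE0, mul_zero]
    exact norm_nonneg _
  · exact le_of_mul_le_mul_right (by nlinarith) hEpos

end Matrix

/-- If `θ, θ' ∈ R^{d×k}` (`k ≥ d`) satisfy `‖θθᵀ − θ'θ'ᵀ‖_F ≤ η` and the smallest
singular value of `θ` is at least `σ₀ > 0` (equivalently `vᵀθθᵀv ≥ σ₀²‖v‖²` for all `v`),
then there are orthogonal `R, R' ∈ R^{k×k}` with `‖θR − θ'R'‖_F ≤ η/σ₀`. -/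
theorem alignment_bound {d k : ℕ} (hk : d ≤ k)
    (θ θ' : Matrix (Fin d) (Fin k) ℝ) (η σ₀ : ℝ) (hσ₀ : 0 < σ₀)
    (hσ : ∀ v : Fin d → ℝ,
      σ₀^2 * ∑ i, (v i)^2 ≤ ∑ i, ∑ j, v i * (θ * θ.transpose) i j * v j)
    (hη : Real.sqrt (∑ i, ∑ j, ((θ * θ.transpose - θ' * θ'.transpose) i j)^2) ≤ η) :
    ∃ R R' : Matrix (Fin k) (Fin k) ℝ,
      (R * R.transpose = 1 ∧ R.transpose * R = 1) ∧
      (R' * R'.transpose = 1 ∧ R'.transpose * R' = 1) ∧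
      Real.sqrt (∑ i, ∑ j, ((θ * R - θ' * R') i j)^2) ≤ η / σ₀ := by
  have hgram (M : Matrix (Fin d) (Fin k) ℝ) : (M * Mᵀ).PosSemidef := by
    simpa using posSemidef_self_mul_conjTranspose M
  set A := CFC.sqrt (θ * θᵀ)
  set B := CFC.sqrt (θ' * θ'ᵀ)
  set J := (1 : Matrix (Fin k) (Fin k) ℝ).submatrix (Fin.castLE hk) id
  have hJ : J * Jᵀ = 1 := submatrix_one_mul_transpose_submatrix_one (Fin.castLE_injective hk)
  obtain ⟨R, hR, hθR⟩ := exists_mem_orthogonalGroup_mul_eq_of_mul_transpose_eq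
    (sqrt_mul_mul_transpose_sqrt_mul (hgram θ) hJ).symm
  obtain ⟨R', hR', hθR'⟩ := exists_mem_orthogonalGroup_mul_eq_of_mul_transpose_eq
    (sqrt_mul_mul_transpose_sqrt_mul (hgram θ') hJ).symm
  have hA : (A - σ₀ • 1).PosSemidef := posSemidef_sqrt_sub_smul_one <|
    posSemidef_sub_smul_one_of_forall_le (by rw [transpose_mul, transpose_transpose]) hσ
  have hB : B.PosSemidef := nonneg_iff_posSemidef.mp (CFC.sqrt_nonneg _)
  refine ⟨R, R', ⟨(mem_orthogonalGroup_iff _ _).mp hR, (mem_orthogonalGroup_iff' _ _).mp hR⟩,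
    ⟨(mem_orthogonalGroup_iff _ _).mp hR', (mem_orthogonalGroup_iff' _ _).mp hR'⟩, ?_⟩
  rw [← frobenius_norm_eq_sqrt_sum_sq] at hη ⊢
  rw [hθR, hθR', ← Matrix.sub_mul, frobenius_norm_mul_of_mul_transpose_eq_one hJ,
    le_div_iff₀ hσ₀, mul_comm]
  calc σ₀ * ‖A - B‖ ≤ ‖A * A - B * B‖ := mul_frobenius_norm_sub_le hA hB
    _ = ‖θ * θᵀ - θ' * θ'ᵀ‖ := by
      rw [CFC.sqrt_mul_sqrt_self _ (hgram θ).nonneg, CFC.sqrt_mul_sqrt_self _ (hgram θ').nonneg]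
    _ ≤ η := hη
end

section
/- There exist Markov transition kernels p̃ and q̃ on a two-point space {0,1} with ‖q̃(·|z') − p̃(·|z')‖_TV ≤ α for every z' ∈ {0,1}, such that the induced distributions p and q on length-T sequences (starting from z₀ = 0) satisfy ‖p − q‖_TV = 2(1 − (1 − α/2)^T). -/
/-- Probability of the sequence `w : Fin T → Bool` under the Markov chain with transition
kernel `k` (where `k z' z` is the probability of moving from `z'` to `z`), started at
`z₀ = false`. -/
def seqProb (k : Bool → Bool → ℝ) (T : ℕ) (w : Fin T → Bool) : ℝ :=
  ∏ t : Fin T,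
    k (if h : (t : ℕ) = 0 then false
       else w ⟨(t : ℕ) - 1, lt_of_le_of_lt (Nat.sub_le _ _) t.isLt⟩) (w t)

/-!
Take `p̃` to be the identity kernel and let `q̃` leak from `0` to the absorbing state `1` with
probability `α/2`; their rows are `α` apart at `0` and equal at `1`. Under `p̃` the chain never
leaves `0`, so `p` is the point mass at the all-`0` sequence, and the total variation distance
from a point mass `δₓ` to a probability `q` is `2 (1 - q x)`. Here `q x = (1 - α/2)^T`, the
probability that no leak happens in `T` steps.
-/

open Finset

/-- The state at time `T` of the path `u`, i.e. the initial state `false` when `T = 0`. -/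
def lastState : {T : ℕ} → (Fin T → Bool) → Bool
  | 0, _ => false
  | _ + 1, u => u (Fin.last _)

theorem seqProb_snoc (k : Bool → Bool → ℝ) {T : ℕ} (u : Fin T → Bool) (b : Bool) :
    seqProb k (T + 1) (Fin.snoc u b) = seqProb k T u * k (lastState u) b := by
  unfold seqProb
  rw [Fin.prod_univ_castSucc, Fin.snoc_last]
  congr 1
  · refine prod_congr rfl fun i _ => ?_
    by_cases hi : (i : ℕ) = 0
    · simp [hi]
    · simp [hi, Fin.snoc, show (i : ℕ) - 1 < T by omega]
  · cases T with
    | zero => rfl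
    | succ n => simp [lastState, Fin.snoc, Fin.last]

theorem sum_seqProb {k : Bool → Bool → ℝ} (hk : ∀ z', ∑ z, k z' z = 1) (T : ℕ) :
    ∑ w : Fin T → Bool, seqProb k T w = 1 := by
  induction T with
  | zero => simp [seqProb]
  | succ T ih =>
    rw [← (Fin.snocEquiv fun _ => Bool).sum_comp, Fintype.sum_prod_type, sum_comm]
    simp only [Fin.snocEquiv, Equiv.coe_fn_mk, seqProb_snoc, ← mul_sum, hk, mul_one, ih]

theorem seqProb_nonneg {k : Bool → Bool → ℝ} (hk : ∀ z' z, 0 ≤ k z' z) {T : ℕ}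
    (w : Fin T → Bool) : 0 ≤ seqProb k T w :=
  prod_nonneg fun _ _ => hk _ _

theorem seqProb_const_false (k : Bool → Bool → ℝ) (T : ℕ) :
    seqProb k T (fun _ => false) = k false false ^ T := by
  simp [seqProb]

theorem seqProb_eq_zero_of_ne_const_false {k : Bool → Bool → ℝ} (hk : k false true = 0) :
    ∀ {T : ℕ} (w : Fin T → Bool), w ≠ (fun _ => false) → seqProb k T w = 0
  | 0, w, hw => absurd (Subsingleton.elim w _) hw
  | T + 1, w, hw => by
    induction w using Fin.snocCases with
    | snoc u b =>
      rw [seqProb_snoc]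
      by_cases hu : u = fun _ => false
      · subst hu
        cases b
        · exact absurd (by ext i; cases i using Fin.lastCases <;> simp) hw
        · cases T <;> simp [lastState, hk]
      · rw [seqProb_eq_zero_of_ne_const_false hk u hu, zero_mul]

theorem sum_abs_sub_eq_of_point_mass {α : Type*} [Fintype α] {p q : α → ℝ} (x : α)
    (hp : ∀ w ≠ x, p w = 0) (hpx : p x = 1) (hq : ∀ w, 0 ≤ q w) (hq1 : ∑ w, q w = 1) :
    ∑ w, |p w - q w| = 2 * (1 - q x) := by
  classical
  have hrest : ∑ w ∈ univ.erase x, |p w - q w| = ∑ w ∈ univ.erase x, q w :=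
    sum_congr rfl fun w hw => by
      rw [hp w (ne_of_mem_erase hw), zero_sub, abs_neg, abs_of_nonneg (hq w)]
  have hqx : q x ≤ 1 := hq1 ▸ single_le_sum (fun w _ => hq w) (mem_univ x)
  rw [← add_sum_erase univ _ (mem_univ x), hrest, hpx, abs_of_nonneg (sub_nonneg.mpr hqx)]
  linarith [add_sum_erase univ q (mem_univ x)]

def stayKernel (z' z : Bool) : ℝ := if z = z' then 1 else 0

def leakKernel (a : ℝ) : Bool → Bool → ℝ
  | false, z => if z then a else 1 - a
  | true, z => if z then 1 else 0

theorem stayKernel_nonneg (z' z : Bool) : 0 ≤ stayKernel z' z := by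
  unfold stayKernel; split_ifs <;> norm_num

theorem sum_stayKernel (z' : Bool) : ∑ z, stayKernel z' z = 1 := by
  cases z' <;> simp [stayKernel]

theorem leakKernel_nonneg {a : ℝ} (ha0 : 0 ≤ a) (ha1 : a ≤ 1) (z' z : Bool) :
    0 ≤ leakKernel a z' z := by
  cases z' <;> cases z <;> simp [leakKernel, ha0, ha1]

theorem sum_leakKernel (a : ℝ) (z' : Bool) : ∑ z, leakKernel a z' z = 1 := by
  cases z' <;> simp [leakKernel]

theorem sum_abs_leakKernel_sub_stayKernel {a : ℝ} (ha : 0 ≤ a) (z' : Bool) :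
    ∑ z, |leakKernel a z' z - stayKernel z' z| ≤ 2 * a := by
  cases z' <;> simp [leakKernel, stayKernel, abs_of_nonneg ha, ha]
  linarith

/-- There exist transition kernels `p̃, q̃` on `{0,1}` with
`‖q̃(·|z') − p̃(·|z')‖_TV ≤ α` for every `z'`, such that the induced distributions over
length-`T` sequences started at `z₀ = 0` satisfy `‖p − q‖_TV = 2(1 − (1 − α/2)^T)`. -/
theorem large_shift_from_small_kernel_shift (α : ℝ) (hα0 : 0 ≤ α) (hα2 : α ≤ 2) (T : ℕ) :
    ∃ ptil qtil : Bool → Bool → ℝ,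
      (∀ z', (∀ z, 0 ≤ ptil z' z) ∧ (∑ z, ptil z' z = 1)) ∧
      (∀ z', (∀ z, 0 ≤ qtil z' z) ∧ (∑ z, qtil z' z = 1)) ∧
      (∀ z', ∑ z, |qtil z' z - ptil z' z| ≤ α) ∧
      ∑ w : Fin T → Bool, |seqProb ptil T w - seqProb qtil T w|
        = 2 * (1 - (1 - α/2)^T) := by
  have ha0 : 0 ≤ α / 2 := by linarith
  have hleak_nonneg := leakKernel_nonneg ha0 (by linarith)
  refine ⟨stayKernel, leakKernel (α / 2), fun z' => ⟨stayKernel_nonneg z', sum_stayKernel z'⟩,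
    fun z' => ⟨hleak_nonneg z', sum_leakKernel _ z'⟩, fun z' => ?_, ?_⟩
  · simpa [mul_div_cancel₀] using sum_abs_leakKernel_sub_stayKernel ha0 z'
  · rw [sum_abs_sub_eq_of_point_mass (p := seqProb stayKernel T) (fun _ => false)
      (seqProb_eq_zero_of_ne_const_false (by simp [stayKernel]))
      (by simp [seqProb_const_false, stayKernel]) (seqProb_nonneg hleak_nonneg)
      (sum_seqProb (sum_leakKernel _) T), seqProb_const_false]
    simp [leakKernel]
end

section
/- Let φ, φ' be symmetric d×d real matrices and let x, x' be unit-norm eigenvectors of φ, φ' corresponding to their respective top eigenvalues, with ⟨x, x'⟩ ≥ 0. Let λ₁ ≥ λ₂ be the two largest eigenvalues of φ'. Then ‖x − x'‖₂ ≤ 2^{3/2}·‖φ − φ'‖_op / (λ₁ − λ₂), assuming λ₁ > λ₂. -/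
/-!
Split `x = ⟪x, x'⟫ x' + w` with `w ⊥ x'`. Pairing the two eigen-equations with `w` gives
`η ‖w‖ ≥ ⟪w, (φ - φ') x⟫ = μ ‖w‖² - ⟪w, φ' w⟫ ≥ (μ - λ₂) ‖w‖²`, while testing the top-eigenvalue
property of `μ` at `x'` gives `μ ≥ λ₁ - η`. Hence `(λ₁ - λ₂) ‖w‖² ≤ η ‖w‖² + η ‖w‖ ≤ 2 η ‖w‖`, i.e.
`sin θ = ‖w‖ ≤ 2η / (λ₁ - λ₂)`, and `cos θ = ⟪x, x'⟫ ≥ 0` gives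
`‖x - x'‖² = 2 - 2 cos θ ≤ 2 sin² θ`.
-/
open scoped RealInnerProductSpace

section TopEigenvector

variable {E : Type*} [NormedAddCommGroup E] [InnerProductSpace ℝ E]

theorem inner_sub_inner_smul_eq_zero {u : E} (hu : ‖u‖ = 1) (x : E) :
    ⟪x - ⟪x, u⟫ • u, u⟫ = 0 := by
  rw [inner_sub_left, real_inner_smul_left, real_inner_self_eq_norm_sq, hu]
  ring

theorem norm_sub_inner_smul_sq {u : E} (hu : ‖u‖ = 1) (x : E) :
    ‖x - ⟪x, u⟫ • u‖ ^ 2 = ‖x‖ ^ 2 - ⟪x, u⟫ ^ 2 := by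
  rw [norm_sub_sq_real, real_inner_smul_right, norm_smul, hu, mul_one, Real.norm_eq_abs, sq_abs]
  ring

theorem norm_sub_sq_le_two_mul_norm_sub_inner_smul_sq {x u : E} (hx : ‖x‖ = 1) (hu : ‖u‖ = 1)
    (hxu : 0 ≤ ⟪x, u⟫) : ‖x - u‖ ^ 2 ≤ 2 * ‖x - ⟪x, u⟫ • u‖ ^ 2 := by
  have hle : ⟪x, u⟫ ≤ 1 := by simpa [hx, hu] using real_inner_le_norm x u
  rw [norm_sub_sq_real, norm_sub_inner_smul_sq hu, hx, hu]
  nlinarith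

theorem inner_map_self_le_mul_norm_sq {B : E →ₗ[ℝ] E} {K : Submodule ℝ E}
    {lam : ℝ} (hB : ∀ v ∈ K, ‖v‖ = 1 → ⟪v, B v⟫ ≤ lam) {w : E} (hw : w ∈ K) :
    ⟪w, B w⟫ ≤ lam * ‖w‖ ^ 2 := by
  rcases eq_or_ne w 0 with rfl | hw0
  · simp
  have hnorm : ‖w‖ ≠ 0 := norm_ne_zero_iff.2 hw0
  have hunit := hB (‖w‖⁻¹ • w) (K.smul_mem _ hw)
    (by rw [norm_smul, norm_inv, norm_norm, inv_mul_cancel₀ hnorm])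
  rw [map_smul, real_inner_smul_left, real_inner_smul_right, ← mul_assoc, ← sq, inv_pow] at hunit
  rwa [inv_mul_le_iff₀ (by positivity), mul_comm] at hunit

theorem sub_le_of_inner_map_self_le {A B : E →ₗ[ℝ] E} {μ lam η : ℝ}
    (hA : ∀ v : E, ‖v‖ = 1 → ⟪v, A v⟫ ≤ μ) {u : E} (hu : ‖u‖ = 1) (hBu : B u = lam • u)
    (hAB : ‖(A - B) u‖ ≤ η) : lam - η ≤ μ := by
  have hsplit : ⟪u, A u⟫ = lam + ⟪u, (A - B) u⟫ := by
    rw [LinearMap.sub_apply, inner_sub_right, hBu, real_inner_smul_right,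
      real_inner_self_eq_norm_sq, hu]
    ring
  have hpert : -η ≤ ⟪u, (A - B) u⟫ := by
    have := abs_real_inner_le_norm u ((A - B) u)
    rw [hu, one_mul] at this
    linarith [neg_abs_le ⟪u, (A - B) u⟫]
  linarith [hA u hu]

theorem inner_sub_inner_smul_map_sub_apply {A B : E →ₗ[ℝ] E} {μ lam : ℝ} {x u : E}
    (hu : ‖u‖ = 1) (hAx : A x = μ • x) (hBu : B u = lam • u) :
    ⟪x - ⟪x, u⟫ • u, (A - B) x⟫ =
      μ * ‖x - ⟪x, u⟫ • u‖ ^ 2 - ⟪x - ⟪x, u⟫ • u, B (x - ⟪x, u⟫ • u)⟫ := by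
  set w := x - ⟪x, u⟫ • u
  have hwu : ⟪w, u⟫ = 0 := inner_sub_inner_smul_eq_zero hu x
  have hx : x = w + ⟪x, u⟫ • u := (sub_add_cancel x _).symm
  have hBx : B x = B w + (⟪x, u⟫ * lam) • u := by
    conv_lhs => rw [hx]
    rw [map_add, map_smul, hBu, smul_smul]
  rw [LinearMap.sub_apply, inner_sub_right, hAx, hBx, real_inner_smul_right, inner_add_right,
    real_inner_smul_right, hwu]
  conv_lhs => rw [hx]
  rw [inner_add_right, real_inner_smul_right, hwu, real_inner_self_eq_norm_sq]
  ring

theorem mul_norm_sub_inner_smul_le {A B : E →ₗ[ℝ] E} {μ lam1 lam2 η : ℝ} {x u : E}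
    (hx : ‖x‖ = 1) (hu : ‖u‖ = 1) (hAx : A x = μ • x) (hA : ∀ v : E, ‖v‖ = 1 → ⟪v, A v⟫ ≤ μ)
    (hBu : B u = lam1 • u) (hB : ∀ v ∈ (ℝ ∙ u)ᗮ, ‖v‖ = 1 → ⟪v, B v⟫ ≤ lam2)
    (hAB : ∀ v : E, ‖(A - B) v‖ ≤ η * ‖v‖) :
    (lam1 - lam2) * ‖x - ⟪x, u⟫ • u‖ ≤ 2 * η := by
  have hη : 0 ≤ η := by simpa [hu] using (norm_nonneg _).trans (hAB u)
  have hμ : lam1 - η ≤ μ := sub_le_of_inner_map_self_le hA hu hBu (by simpa [hu] using hAB u)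
  have hw_sq : ‖x - ⟪x, u⟫ • u‖ ^ 2 = 1 - ⟪x, u⟫ ^ 2 := by
    rw [norm_sub_inner_smul_sq hu, hx, one_pow]
  have hBw := inner_map_self_le_mul_norm_sq hB <|
    Submodule.mem_orthogonal_singleton_iff_inner_left.2 (inner_sub_inner_smul_eq_zero hu x)
  have hAw := (real_inner_le_norm (x - ⟪x, u⟫ • u) ((A - B) x)).trans
    (mul_le_mul_of_nonneg_left (hAB x) (norm_nonneg _))
  rw [inner_sub_inner_smul_map_sub_apply hu hAx hBu, hx, mul_one] at hAw
  set w := x - ⟪x, u⟫ • u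
  have hw0 : 0 ≤ ‖w‖ := norm_nonneg w
  have hw1 : ‖w‖ ≤ 1 := by nlinarith [sq_nonneg ⟪x, u⟫]
  have hquad : (lam1 - lam2) * ‖w‖ ^ 2 ≤ 2 * η * ‖w‖ := by
    nlinarith [mul_le_mul_of_nonneg_left hw1 (mul_nonneg hη hw0)]
  rcases hw0.eq_or_lt with hw | hw
  · rw [← hw]; linarith
  · nlinarith

theorem norm_sub_le_of_eigengap {A B : E →ₗ[ℝ] E} {μ lam1 lam2 η : ℝ} {x u : E}
    (hx : ‖x‖ = 1) (hu : ‖u‖ = 1) (hAx : A x = μ • x) (hA : ∀ v : E, ‖v‖ = 1 → ⟪v, A v⟫ ≤ μ)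
    (hBu : B u = lam1 • u) (hB : ∀ v ∈ (ℝ ∙ u)ᗮ, ‖v‖ = 1 → ⟪v, B v⟫ ≤ lam2)
    (hgap : lam2 < lam1) (hxu : 0 ≤ ⟪x, u⟫) (hAB : ∀ v : E, ‖(A - B) v‖ ≤ η * ‖v‖) :
    ‖x - u‖ ≤ 2 ^ ((3 : ℝ) / 2) * η / (lam1 - lam2) := by
  have hsin : ‖x - ⟪x, u⟫ • u‖ ≤ 2 * η / (lam1 - lam2) := by
    rw [le_div_iff₀ (sub_pos.2 hgap), mul_comm]
    exact mul_norm_sub_inner_smul_le hx hu hAx hA hBu hB hAB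
  have hproj : ‖x - u‖ ≤ √2 * ‖x - ⟪x, u⟫ • u‖ := by
    rw [← Real.sqrt_sq (norm_nonneg (x - u)), ← Real.sqrt_sq (norm_nonneg (x - ⟪x, u⟫ • u)),
      ← Real.sqrt_mul zero_le_two]
    exact Real.sqrt_le_sqrt (norm_sub_sq_le_two_mul_norm_sub_inner_smul_sq hx hu hxu)
  have hpow : (2 : ℝ) ^ ((3 : ℝ) / 2) = √2 * 2 := by
    rw [show (3 : ℝ) / 2 = 1 / 2 + 1 by norm_num, Real.rpow_add two_pos, Real.rpow_one,
      Real.sqrt_eq_rpow]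
  calc ‖x - u‖ ≤ √2 * (2 * η / (lam1 - lam2)) :=
        hproj.trans (mul_le_mul_of_nonneg_left hsin (Real.sqrt_nonneg 2))
    _ = 2 ^ ((3 : ℝ) / 2) * η / (lam1 - lam2) := by rw [hpow]; ring

end TopEigenvector

section Euclidean

variable {ι : Type*} [Fintype ι]

theorem EuclideanSpace.norm_eq_sqrt_sum_sq (v : EuclideanSpace ℝ ι) : ‖v‖ = √(∑ i, v i ^ 2) := by
  simp [EuclideanSpace.norm_eq]

theorem EuclideanSpace.real_inner_eq_sum_mul (v w : EuclideanSpace ℝ ι) :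
    ⟪v, w⟫ = ∑ i, v i * w i := by
  simp [EuclideanSpace.inner_eq_star_dotProduct, dotProduct, mul_comm]

variable [DecidableEq ι]

theorem Matrix.toEuclideanLin_apply_eq_sum (φ : Matrix ι ι ℝ) (v : EuclideanSpace ℝ ι) (i : ι) :
    Matrix.toEuclideanLin φ v i = ∑ j, φ i j * v j := rfl

theorem Matrix.real_inner_toEuclideanLin_self (φ : Matrix ι ι ℝ) (v : EuclideanSpace ℝ ι) :
    ⟪v, Matrix.toEuclideanLin φ v⟫ = ∑ i, ∑ j, v i * φ i j * v j := by
  simp only [EuclideanSpace.real_inner_eq_sum_mul, Matrix.toEuclideanLin_apply_eq_sum,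
    Finset.mul_sum, mul_assoc]

end Euclidean

theorem davis_kahan_top_eigenvector_general {d : ℕ} (φ φ' : Matrix (Fin d) (Fin d) ℝ)
    (x x' : Fin d → ℝ) (hx : ∑ i, (x i)^2 = 1) (hx' : ∑ i, (x' i)^2 = 1)
    (μ lam1 lam2 η : ℝ)
    (hxeig : ∀ i, ∑ j, φ i j * x j = μ * x i)
    (hμtop : ∀ v : Fin d → ℝ, ∑ i, (v i)^2 = 1 → ∑ i, ∑ j, v i * φ i j * v j ≤ μ)
    (hx'eig : ∀ i, ∑ j, φ' i j * x' j = lam1 * x' i)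
    (hlam2 : ∀ v : Fin d → ℝ, ∑ i, (v i)^2 = 1 → (∑ i, v i * x' i) = 0 →
      ∑ i, ∑ j, v i * φ' i j * v j ≤ lam2)
    (hgap : lam2 < lam1)
    (hip : 0 ≤ ∑ i, x i * x' i)
    (hop : ∀ v : Fin d → ℝ,
      Real.sqrt (∑ i, (∑ j, (φ - φ') i j * v j)^2) ≤ η * Real.sqrt (∑ i, (v i)^2)) :
    Real.sqrt (∑ i, (x i - x' i)^2) ≤ (2 : ℝ) ^ ((3 : ℝ)/2) * η / (lam1 - lam2) := by
  have key := norm_sub_le_of_eigengap (A := Matrix.toEuclideanLin φ)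
    (B := Matrix.toEuclideanLin φ') (μ := μ) (η := η) (x := WithLp.toLp 2 x)
    (u := WithLp.toLp 2 x') ?_ ?_ ?_ ?_ ?_ ?_ hgap ?_ ?_
  · simpa [EuclideanSpace.norm_eq_sqrt_sum_sq] using key
  · rw [EuclideanSpace.norm_eq_sqrt_sum_sq]; simp [hx]
  · rw [EuclideanSpace.norm_eq_sqrt_sum_sq]; simp [hx']
  · ext i; rw [Matrix.toEuclideanLin_apply_eq_sum]; simpa using hxeig i
  · intro v hv
    rw [Matrix.real_inner_toEuclideanLin_self]
    exact hμtop v (by simpa [EuclideanSpace.norm_eq_sqrt_sum_sq] using hv)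
  · ext i; rw [Matrix.toEuclideanLin_apply_eq_sum]; simpa using hx'eig i
  · intro v hvx' hv
    rw [Matrix.real_inner_toEuclideanLin_self]
    refine hlam2 v (by simpa [EuclideanSpace.norm_eq_sqrt_sum_sq] using hv) ?_
    simpa [EuclideanSpace.real_inner_eq_sum_mul] using
      Submodule.mem_orthogonal_singleton_iff_inner_left.1 hvx'
  · simpa [EuclideanSpace.real_inner_eq_sum_mul] using hip
  · intro v
    rw [← map_sub, EuclideanSpace.norm_eq_sqrt_sum_sq, EuclideanSpace.norm_eq_sqrt_sum_sq]
    simpa only [Matrix.toEuclideanLin_apply_eq_sum] using hop v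

/-- Davis–Kahan bound for top eigenvectors: if `x, x'` are unit eigenvectors of the
symmetric matrices `φ, φ'` for their top eigenvalues `μ`, `λ₁`, with `⟨x, x'⟩ ≥ 0`,
`λ₂` bounds the Rayleigh quotient of `φ'` on the orthogonal complement of `x'`,
`λ₂ < λ₁`, and `‖φ − φ'‖_op ≤ η`, then `‖x − x'‖₂ ≤ 2^{3/2} η / (λ₁ − λ₂)`. -/
theorem davis_kahan_top_eigenvector {d : ℕ} (φ φ' : Matrix (Fin d) (Fin d) ℝ)
    (hφ : φ.IsSymm) (hφ' : φ'.IsSymm)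
    (x x' : Fin d → ℝ) (hx : ∑ i, (x i)^2 = 1) (hx' : ∑ i, (x' i)^2 = 1)
    (μ lam1 lam2 η : ℝ)
    (hxeig : ∀ i, ∑ j, φ i j * x j = μ * x i)
    (hμtop : ∀ v : Fin d → ℝ, ∑ i, (v i)^2 = 1 → ∑ i, ∑ j, v i * φ i j * v j ≤ μ)
    (hx'eig : ∀ i, ∑ j, φ' i j * x' j = lam1 * x' i)
    (hlam1top : ∀ v : Fin d → ℝ, ∑ i, (v i)^2 = 1 → ∑ i, ∑ j, v i * φ' i j * v j ≤ lam1)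
    (hlam2 : ∀ v : Fin d → ℝ, ∑ i, (v i)^2 = 1 → (∑ i, v i * x' i) = 0 →
      ∑ i, ∑ j, v i * φ' i j * v j ≤ lam2)
    (hgap : lam2 < lam1)
    (hip : 0 ≤ ∑ i, x i * x' i)
    (hop : ∀ v : Fin d → ℝ,
      Real.sqrt (∑ i, (∑ j, (φ - φ') i j * v j)^2) ≤ η * Real.sqrt (∑ i, (v i)^2)) :
    Real.sqrt (∑ i, (x i - x' i)^2) ≤ (2 : ℝ) ^ ((3 : ℝ)/2) * η / (lam1 - lam2) :=
  davis_kahan_top_eigenvector_general φ φ' x x' hx hx' μ lam1 lam2 η hxeig hμtop hx'eig hlam2 hgap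
    hip hop
end
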